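/- Let d ∈ ℕ, d ≥ 1, α > 0, ε ∈ (0, α), and z ∈ ℝᵈ \ {0}. Then ∫₀^∞ t^{−d/α − 1} (t^{1/α} / (t^{1/α} + |z|))^{d + α − ε} dt ≤ C |z|^{−d}, where C depends only on d, α, ε. -/

import Mathlib

open MeasureTheory Set Real

/-! Split `(0, ∞)` at `t = ‖z‖^α`, where `t^{1/α}` and `‖z‖` are comparable. Below it the
ratio `t^{1/α}/(t^{1/α}+‖z‖)` is at most `t^{1/α}/‖z‖`, which leaves the integrable singularity
`t^{-ε/α}` at `0`; above it the ratio is at most `1`, which leaves the integrable tail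
`t^{-d/α-1}`. Both pieces are exactly `‖z‖^{-d}` times a constant. -/

theorem integrableOn_of_nonneg_of_le {f g : ℝ → ℝ} {s : Set ℝ} (hs : MeasurableSet s)
    (hf : AEStronglyMeasurable f (volume.restrict s)) (hg : IntegrableOn g s)
    (hf_nonneg : ∀ t ∈ s, 0 ≤ f t) (hfg : ∀ t ∈ s, f t ≤ g t) : IntegrableOn f s :=
  hg.mono' hf <| by
    filter_upwards [ae_restrict_mem hs] with t ht
    rw [norm_of_nonneg (hf_nonneg t ht)]
    exact hfg t ht

theorem setIntegral_Ioi_le_add_of_le {f g h : ℝ → ℝ} {a b : ℝ} (hab : a ≤ b)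
    (hf : AEStronglyMeasurable f (volume.restrict (Ioi a))) (hf_nonneg : ∀ t ∈ Ioi a, 0 ≤ f t)
    (hg : IntegrableOn g (Ioc a b)) (hh : IntegrableOn h (Ioi b))
    (hfg : ∀ t ∈ Ioc a b, f t ≤ g t) (hfh : ∀ t ∈ Ioi b, f t ≤ h t) :
    ∫ t in Ioi a, f t ≤ (∫ t in Ioc a b, g t) + ∫ t in Ioi b, h t := by
  have hf₁ : IntegrableOn f (Ioc a b) :=
    integrableOn_of_nonneg_of_le measurableSet_Ioc (hf.mono_set Ioc_subset_Ioi_self) hg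
      (fun t ht ↦ hf_nonneg t ht.1) hfg
  have hf₂ : IntegrableOn f (Ioi b) :=
    integrableOn_of_nonneg_of_le measurableSet_Ioi (hf.mono_set (Ioi_subset_Ioi hab)) hh
      (fun t ht ↦ hf_nonneg t (hab.trans_lt ht)) hfh
  rw [← Ioc_union_Ioi_eq_Ioi hab,
    setIntegral_union (Ioc_disjoint_Ioi le_rfl) measurableSet_Ioi hf₁ hf₂]
  exact add_le_add (setIntegral_mono_on hf₁ hg measurableSet_Ioc hfg)
    (setIntegral_mono_on hf₂ hh measurableSet_Ioi hfh)

theorem integral_Ioc_zero_rpow {s b : ℝ} (hs : -1 < s) (hb : 0 ≤ b) :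
    ∫ t in Ioc 0 b, t ^ s = b ^ (s + 1) / (s + 1) := by
  rw [← intervalIntegral.integral_of_le hb, integral_rpow (Or.inl hs),
    zero_rpow (by linarith), sub_zero]

theorem integrableOn_Ioc_zero_rpow {s b : ℝ} (hs : -1 < s) (hb : 0 ≤ b) :
    IntegrableOn (fun t : ℝ ↦ t ^ s) (Ioc 0 b) :=
  (intervalIntegrable_iff_integrableOn_Ioc_of_le hb).mp
    (intervalIntegral.intervalIntegrable_rpow' hs)

section RatioIntegrand

variable {p β q r t : ℝ}

theorem rpow_mul_ratio_rpow_le_rpow_mul_rpow (ht : 0 < t) (hr : 0 < r) (hq : 0 ≤ q) :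
    t ^ (-p - 1) * (t ^ β / (t ^ β + r)) ^ q ≤ r ^ (-q) * t ^ (q * β - p - 1) := by
  have hratio : t ^ β / (t ^ β + r) ≤ t ^ β / r :=
    div_le_div_of_nonneg_left (by positivity) hr (by linarith [rpow_nonneg ht.le β])
  calc t ^ (-p - 1) * (t ^ β / (t ^ β + r)) ^ q ≤ t ^ (-p - 1) * (t ^ β / r) ^ q := by
        gcongr
    _ = r ^ (-q) * t ^ (q * β - p - 1) := by
        rw [div_rpow (by positivity) hr.le, ← rpow_mul ht.le, rpow_neg hr.le, div_eq_mul_inv,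
          ← mul_assoc, ← rpow_add ht]
        ring_nf

theorem rpow_mul_ratio_rpow_le_rpow (ht : 0 < t) (hr : 0 < r) (hq : 0 ≤ q) :
    t ^ (-p - 1) * (t ^ β / (t ^ β + r)) ^ q ≤ t ^ (-p - 1) := by
  have hratio : t ^ β / (t ^ β + r) ≤ 1 := by
    rw [div_le_one (by positivity)]
    linarith
  calc t ^ (-p - 1) * (t ^ β / (t ^ β + r)) ^ q ≤ t ^ (-p - 1) * 1 ^ q := by gcongr
    _ = t ^ (-p - 1) := by rw [one_rpow, mul_one]

theorem integral_Ioi_rpow_mul_ratio_rpow_le_rpow (hp : 0 < p) (hβ : 0 < β) (hpq : p < q * β)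
    (hr : 0 < r) :
    ∫ t in Ioi 0, t ^ (-p - 1) * (t ^ β / (t ^ β + r)) ^ q
      ≤ (1 / (q * β - p) + 1 / p) * r ^ (-p / β) := by
  have hq : 0 ≤ q := (pos_of_mul_pos_left (hp.trans hpq) hβ.le).le
  have hs : -1 < q * β - p - 1 := by linarith
  have htail : -p - 1 < -1 := by linarith
  set R := r ^ (1 / β)
  have hR : 0 < R := rpow_pos_of_pos hr _
  have hR_rpow (x : ℝ) : R ^ x = r ^ (x / β) := by rw [← rpow_mul hr.le]; ring_nf
  calc ∫ t in Ioi 0, t ^ (-p - 1) * (t ^ β / (t ^ β + r)) ^ q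
      ≤ (∫ t in Ioc 0 R, r ^ (-q) * t ^ (q * β - p - 1)) + ∫ t in Ioi R, t ^ (-p - 1) :=
        setIntegral_Ioi_le_add_of_le hR.le (by fun_prop)
          (fun t ht ↦ by have : 0 < t := ht; positivity)
          ((integrableOn_Ioc_zero_rpow hs hR.le).const_mul _)
          (integrableOn_Ioi_rpow_of_lt htail hR)
          (fun t ht ↦ rpow_mul_ratio_rpow_le_rpow_mul_rpow ht.1 hr hq)
          (fun t ht ↦ rpow_mul_ratio_rpow_le_rpow (hR.trans ht) hr hq)
    _ = r ^ (-q) * r ^ ((q * β - p) / β) / (q * β - p) + r ^ (-p / β) / p := by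
        rw [integral_const_mul, integral_Ioc_zero_rpow hs hR.le, integral_Ioi_rpow_of_lt htail hR,
          hR_rpow, hR_rpow]
        ring_nf
    _ = (1 / (q * β - p) + 1 / p) * r ^ (-p / β) := by
        rw [← rpow_add hr, show -q + (q * β - p) / β = -p / β by field_simp; ring]
        ring

end RatioIntegrand

theorem integral_heat_kernel_bound_general
    (d : ℕ) (hd : 1 ≤ d) (α ε : ℝ) (hα : 0 < α) (hεα : ε < α) :
    ∃ C > (0 : ℝ), ∀ z : EuclideanSpace ℝ (Fin d), z ≠ 0 →
      (∫ t in Set.Ioi (0 : ℝ),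
          t ^ (-(d : ℝ) / α - 1) *
            (t ^ (1 / α) / (t ^ (1 / α) + ‖z‖)) ^ ((d : ℝ) + α - ε))
        ≤ C * ‖z‖ ^ (-(d : ℝ)) := by
  have hd_pos : (0 : ℝ) < d := by exact_mod_cast hd
  have hαε : 0 < α - ε := by linarith
  refine ⟨α / (α - ε) + α / d, by positivity, fun z hz ↦ ?_⟩
  have hpq : (d : ℝ) / α < ((d : ℝ) + α - ε) * (1 / α) := by
    rw [mul_one_div]
    exact div_lt_div_of_pos_right (by linarith) hα
  have key := integral_Ioi_rpow_mul_ratio_rpow_le_rpow (by positivity) (by positivity) hpq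
    (norm_pos_iff.mpr hz)
  have hC :
      1 / (((d : ℝ) + α - ε) * (1 / α) - d / α) + 1 / (d / α) = α / (α - ε) + α / d := by
    rw [mul_one_div, ← sub_div, one_div_div, one_div_div]
    ring_nf
  have hexp : -((d : ℝ) / α) / (1 / α) = -d := by field_simp
  rwa [hC, hexp, ← neg_div] at key

/-- For `z ≠ 0` in `ℝᵈ`, `∫₀^∞ t^{-d/α-1} (t^{1/α}/(t^{1/α}+|z|))^{d+α-ε} dt ≤ C |z|^{-d}`. -/
theorem integral_heat_kernel_bound
    (d : ℕ) (hd : 1 ≤ d) (α ε : ℝ) (hα : 0 < α) (hε : 0 < ε) (hεα : ε < α) :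
    ∃ C > (0 : ℝ), ∀ z : EuclideanSpace ℝ (Fin d), z ≠ 0 →
      (∫ t in Set.Ioi (0 : ℝ),
          t ^ (-(d : ℝ) / α - 1) *
            (t ^ (1 / α) / (t ^ (1 / α) + ‖z‖)) ^ ((d : ℝ) + α - ε))
        ≤ C * ‖z‖ ^ (-(d : ℝ)) :=
  integral_heat_kernel_bound_general d hd α ε hα hεα
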